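/- arXiv:1811.11366 — 6 statements merged into one kernel-verified Lean document; each statement's English description precedes it below -/
import Mathlib

section
/- Let α be a type equipped with an additive action of ℝ (written t +ᵥ L, satisfying 0 +ᵥ L = L and (s + t) +ᵥ L = s +ᵥ (t +ᵥ L)). Let T : ℝ → α → M₂(ℂ) be such that for every L ∈ α the map t ↦ T(t, L) is differentiable, T(0, L) = I for all L, and T satisfies the cocycle property T(t₁ + t₂, L) = T(t₁, t₂ +ᵥ L) · T(t₂, L) for all t₁, t₂ ∈ ℝ and L ∈ α. Then, defining B : α → M₂(ℂ) by B(L) := (d/ds T(s, L))|ₛ₌₀, one has for all t ∈ ℝ and L ∈ α: (d/ds T(s, L))|ₛ₌ₜ = B(t +ᵥ L) · T(t, L). -/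
/-! Differentiating the cocycle identity `T(s, L) = T(s - t, t +ᵥ L) · T(t, L)` in `s` at `s = t`
only differentiates the first factor, and only at time `0`, where its derivative is `B(t +ᵥ L)`. -/

theorem cocycle_eq_mul_of_sub {α M : Type*} [AddAction ℝ α] [Mul M] {T : ℝ → α → M}
    (hcocycle : ∀ (t₁ t₂ : ℝ) (L : α), T (t₁ + t₂) L = T t₁ (t₂ +ᵥ L) * T t₂ L)
    (s t : ℝ) (L : α) : T s L = T (s - t) (t +ᵥ L) * T t L := by
  simpa using hcocycle (s - t) t L

theorem Matrix.hasDerivAt_mul_const_apply {𝕜 R m n p : Type*} [NontriviallyNormedField 𝕜]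
    [NormedRing R] [NormedAlgebra 𝕜 R] [Fintype n]
    {A : 𝕜 → Matrix m n R} {A' : Matrix m n R} {x : 𝕜}
    (hA : ∀ i k, HasDerivAt (fun s => A s i k) (A' i k) x) (C : Matrix n p R) (i : m) (j : p) :
    HasDerivAt (fun s => (A s * C) i j) ((A' * C) i j) x := by
  simp only [Matrix.mul_apply]
  exact HasDerivAt.fun_sum fun k _ => (hA i k).mul_const _

theorem stmt1_general {α : Type*} [AddAction ℝ α]
    (T : ℝ → α → Matrix (Fin 2) (Fin 2) ℂ)
    (hdiff : ∀ (L : α) (i j : Fin 2), Differentiable ℝ (fun t : ℝ => T t L i j))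
    (hcocycle : ∀ (t₁ t₂ : ℝ) (L : α), T (t₁ + t₂) L = T t₁ (t₂ +ᵥ L) * T t₂ L)
    (B : α → Matrix (Fin 2) (Fin 2) ℂ)
    (hB : ∀ (L : α) (i j : Fin 2), B L i j = deriv (fun s : ℝ => T s L i j) 0) :
    ∀ (t : ℝ) (L : α) (i j : Fin 2),
      deriv (fun s : ℝ => T s L i j) t = (B (t +ᵥ L) * T t L) i j := by
  intro t L i j
  have hshift : ∀ i k, HasDerivAt (fun s => T (s - t) (t +ᵥ L) i k) (B (t +ᵥ L) i k) t := by
    intro i k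
    rw [hB]
    refine HasDerivAt.comp_sub_const (f := fun s => T s (t +ᵥ L) i k) t t ?_
    rw [sub_self]
    exact (hdiff (t +ᵥ L) i k 0).hasDerivAt
  have hsplit : (fun s => T s L i j) = fun s => (T (s - t) (t +ᵥ L) * T t L) i j :=
    funext fun s => by rw [← cocycle_eq_mul_of_sub hcocycle s t L]
  rw [hsplit]
  exact (Matrix.hasDerivAt_mul_const_apply hshift (T t L) i j).deriv

/-- Forward direction of Proposition 2.2: a smooth cocycle `T` over an additive
`ℝ`-action satisfies the autonomous ODE `(d/ds T(s,L))|_{s=t} = B(t +ᵥ L) * T(t,L)`,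
where `B(L)` is the entrywise derivative of `s ↦ T(s,L)` at `s = 0`. -/
theorem stmt1 {α : Type*} [AddAction ℝ α]
    (T : ℝ → α → Matrix (Fin 2) (Fin 2) ℂ)
    (hdiff : ∀ (L : α) (i j : Fin 2), Differentiable ℝ (fun t : ℝ => T t L i j))
    (hid : ∀ L : α, T 0 L = 1)
    (hcocycle : ∀ (t₁ t₂ : ℝ) (L : α), T (t₁ + t₂) L = T t₁ (t₂ +ᵥ L) * T t₂ L)
    (B : α → Matrix (Fin 2) (Fin 2) ℂ)
    (hB : ∀ (L : α) (i j : Fin 2), B L i j = deriv (fun s : ℝ => T s L i j) 0) :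
    ∀ (t : ℝ) (L : α) (i j : Fin 2),
      deriv (fun s : ℝ => T s L i j) t = (B (t +ᵥ L) * T t L) i j :=
  stmt1_general T hdiff hcocycle B hB
end

section
/- Let α be a type equipped with an additive action of ℝ (written t +ᵥ L). Let B : α → M₂(ℂ) be such that for each L ∈ α the map t ↦ B(t +ᵥ L) is continuous, and let T : ℝ → α → M₂(ℂ) satisfy T(0, L) = I for all L and the differential equation (d/ds T(s, L))|ₛ₌ₜ = B(t +ᵥ L) · T(t, L) for all t ∈ ℝ and L ∈ α. Then T satisfies the cocycle property: T(t₁ + t₂, L) = T(t₁, t₂ +ᵥ L) · T(t₂, L) for all t₁, t₂ ∈ ℝ and L ∈ α. -/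
/-!
Both `s ↦ T(s + t₂, L)` and `s ↦ T(s, t₂ +ᵥ L) · T(t₂, L)` solve the linear ODE
`X' = B(s +ᵥ t₂ +ᵥ L) · X` and agree at `s = 0`. Left multiplication by a continuous
matrix-valued coefficient is Lipschitz with a locally uniform constant, so solutions of this
ODE are unique, and the two curves coincide at `s = t₁`.
-/

open Set

theorem ODE_solution_unique_linear {E : Type*} [NormedAddCommGroup E] [NormedSpace ℝ E]
    {A : ℝ → E →L[ℝ] E} (hA : Continuous A) {f g : ℝ → E}
    (hf : ∀ t, HasDerivAt f (A t (f t)) t) (hg : ∀ t, HasDerivAt g (A t (g t)) t)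
    {t₀ : ℝ} (heq : f t₀ = g t₀) : f = g := by
  funext t
  set r := |t - t₀| + 1
  have ht : t ∈ Ioo (t₀ - r) (t₀ + r) := by
    have := abs_lt.mp (lt_add_one |t - t₀|)
    constructor <;> linarith
  have ht₀ : t₀ ∈ Ioo (t₀ - r) (t₀ + r) := by
    have := abs_nonneg (t - t₀)
    constructor <;> linarith
  obtain ⟨C, hC⟩ := isCompact_Icc.exists_bound_of_continuousOn hA.continuousOn
  have hlip (s) (hs : s ∈ Ioo (t₀ - r) (t₀ + r)) : LipschitzOnWith C.toNNReal (A s) univ := by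
    refine ((A s).lipschitz.weaken ?_).lipschitzOnWith
    rw [← norm_toNNReal]
    exact Real.toNNReal_le_toNNReal (hC s (Ioo_subset_Icc_self hs))
  exact ODE_solution_unique_of_mem_Ioo hlip ht₀ (fun s _ => ⟨hf s, mem_univ _⟩)
    (fun s _ => ⟨hg s, mem_univ _⟩) heq ht

namespace Matrix

variable {m n : Type*} [Fintype m] [Fintype n]

-- `HasDerivAt` only sees the product topology, so the choice of matrix norm is immaterial.
theorem hasDerivAt_iff_forall_apply {E : Type*} [NormedAddCommGroup E] [NormedSpace ℝ E]
    {f : ℝ → Matrix m n E} {f' : Matrix m n E} {t : ℝ} :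
    HasDerivAt f f' t ↔ ∀ i j, HasDerivAt (fun s => f s i j) (f' i j) t := by
  let := Matrix.normedAddCommGroup (m := m) (n := n) (α := E)
  let := Matrix.normedSpace (m := m) (n := n) (α := E) (R := ℝ)
  exact hasDerivAt_pi.trans (forall_congr' fun _ => hasDerivAt_pi)

theorem _root_.HasDerivAt.matrix_mul_const {R : Type*} [NormedRing R] [NormedAlgebra ℝ R]
    {l : Type*} [Fintype l] {f : ℝ → Matrix m n R} {f' : Matrix m n R} {t : ℝ}
    (hf : HasDerivAt f f' t) (M : Matrix n l R) :
    HasDerivAt (fun s => f s * M) (f' * M) t :=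
  hasDerivAt_iff_forall_apply.2 fun i j => by
    simp only [mul_apply]
    exact HasDerivAt.fun_sum fun k _ => (hasDerivAt_iff_forall_apply.1 hf i k).mul_const _

variable {𝕜 : Type*} [RCLike 𝕜] [DecidableEq n]

noncomputable def mulLeftCLM : Matrix n n 𝕜 →L[ℝ] Matrix n n 𝕜 →L[ℝ] Matrix n n 𝕜 :=
  LinearMap.toContinuousLinearMap
    (LinearMap.toContinuousLinearMap.toLinearMap ∘ₗ LinearMap.mul ℝ (Matrix n n 𝕜))

theorem ODE_solution_unique_mul_left {A : ℝ → Matrix n n 𝕜} (hA : Continuous A)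
    {f g : ℝ → Matrix n n 𝕜} (hf : ∀ t, HasDerivAt f (A t * f t) t)
    (hg : ∀ t, HasDerivAt g (A t * g t) t) {t₀ : ℝ} (heq : f t₀ = g t₀) : f = g := by
  let := Matrix.normedAddCommGroup (m := n) (n := n) (α := 𝕜)
  let := Matrix.normedSpace (m := n) (n := n) (α := 𝕜) (R := ℝ)
  exact ODE_solution_unique_linear ((map_continuous mulLeftCLM).comp hA) hf hg heq

end Matrix

/-- Converse direction of Proposition 2.2: if `T(0,L) = I` and `T` satisfies the
linear ODE `(d/ds T(s,L))|_{s=t} = B(t +ᵥ L) * T(t,L)` with `t ↦ B(t +ᵥ L)`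
continuous, then `T` satisfies the cocycle property. -/
theorem stmt2 {α : Type*} [AddAction ℝ α]
    (B : α → Matrix (Fin 2) (Fin 2) ℂ)
    (hBcont : ∀ (L : α) (i j : Fin 2), Continuous (fun t : ℝ => B (t +ᵥ L) i j))
    (T : ℝ → α → Matrix (Fin 2) (Fin 2) ℂ)
    (hid : ∀ L : α, T 0 L = 1)
    (hode : ∀ (t : ℝ) (L : α) (i j : Fin 2),
      HasDerivAt (fun s : ℝ => T s L i j) ((B (t +ᵥ L) * T t L) i j) t) :
    ∀ (t₁ t₂ : ℝ) (L : α), T (t₁ + t₂) L = T t₁ (t₂ +ᵥ L) * T t₂ L := by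
  intro t₁ t₂ L
  have hshift (s : ℝ) :
      HasDerivAt (fun s => T (s + t₂) L) (B (s +ᵥ t₂ +ᵥ L) * T (s + t₂) L) s :=
    Matrix.hasDerivAt_iff_forall_apply.2 fun i j => by
      simpa only [add_vadd] using (hode (s + t₂) L i j).comp_add_const s t₂
  have hprod (s : ℝ) : HasDerivAt (fun s => T s (t₂ +ᵥ L) * T t₂ L)
      (B (s +ᵥ t₂ +ᵥ L) * (T s (t₂ +ᵥ L) * T t₂ L)) s := by
    simpa only [Matrix.mul_assoc] using
      (Matrix.hasDerivAt_iff_forall_apply.2 (hode s (t₂ +ᵥ L))).matrix_mul_const (T t₂ L)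
  have hflow := Matrix.ODE_solution_unique_mul_left (continuous_matrix (hBcont (t₂ +ᵥ L)))
    hshift hprod (t₀ := 0) (by simp [hid])
  exact congrFun hflow t₁
end

section
/- Let M, B : ℝ × ℝ → M₂(ℂ) be continuously differentiable matrix-valued functions of (x, t) satisfying the zero-curvature equation ∂ₜM − ∂ₓB = B·M − M·B everywhere, and let T : ℝ × ℝ → M₂(ℂ) be twice continuously differentiable with T(0, t) = I for all t and ∂ₓT(x, t) = M(x, t) · T(x, t) for all (x, t). Then for all (x, t): ∂ₜT(x, t) = B(x, t) · T(x, t) − T(x, t) · B(0, t). -/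
/-!
Fix `t` and put `D x = ∂ₜT (x, t) - (B (x, t) * T (x, t) - T (x, t) * B (0, t))`.
Symmetry of second derivatives gives `∂ₓ∂ₜT = ∂ₜ(M * T)`, and with the zero-curvature equation
this becomes the linear equation `∂ₓD = M * D`. Since `T (0, ·) = 1`, `D 0 = 0`, so uniqueness
for linear ODEs forces `D = 0`. The argument works in any normed `ℝ`-algebra; the operator norm
makes matrices one.
-/

open Set

section PartialDerivatives

variable {E : Type*} [NormedAddCommGroup E] [NormedSpace ℝ E]

/-- `∂ₓ f`, as the derivative of a section; junk value `0` where that section is not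
differentiable. -/
noncomputable def partialFst (f : ℝ × ℝ → E) (p : ℝ × ℝ) : E := deriv (fun x => f (x, p.2)) p.1

noncomputable def partialSnd (f : ℝ × ℝ → E) (p : ℝ × ℝ) : E := deriv (fun t => f (p.1, t)) p.2

variable {f : ℝ × ℝ → E} {x t : ℝ}

theorem HasFDerivAt.hasDerivAt_comp_mk_left {f' : ℝ × ℝ →L[ℝ] E} (hf : HasFDerivAt f f' (x, t)) :
    HasDerivAt (fun y => f (y, t)) (f' (1, 0)) x :=
  hf.comp_hasDerivAt x ((hasDerivAt_id x).prodMk (hasDerivAt_const x t))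

theorem HasFDerivAt.hasDerivAt_comp_mk_right {f' : ℝ × ℝ →L[ℝ] E} (hf : HasFDerivAt f f' (x, t)) :
    HasDerivAt (fun s => f (x, s)) (f' (0, 1)) t :=
  hf.comp_hasDerivAt t ((hasDerivAt_const t x).prodMk (hasDerivAt_id t))

theorem hasDerivAt_partialFst (hf : DifferentiableAt ℝ f (x, t)) :
    HasDerivAt (fun y => f (y, t)) (partialFst f (x, t)) x :=
  hf.hasFDerivAt.hasDerivAt_comp_mk_left.differentiableAt.hasDerivAt

theorem hasDerivAt_partialSnd (hf : DifferentiableAt ℝ f (x, t)) :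
    HasDerivAt (fun s => f (x, s)) (partialSnd f (x, t)) t :=
  hf.hasFDerivAt.hasDerivAt_comp_mk_right.differentiableAt.hasDerivAt

theorem partialFst_eq_fderiv (hf : Differentiable ℝ f) :
    partialFst f = fun p => fderiv ℝ f p (1, 0) :=
  funext fun _ => (hf _).hasFDerivAt.hasDerivAt_comp_mk_left.deriv

theorem partialSnd_eq_fderiv (hf : Differentiable ℝ f) :
    partialSnd f = fun p => fderiv ℝ f p (0, 1) :=
  funext fun _ => (hf _).hasFDerivAt.hasDerivAt_comp_mk_right.deriv

/-- Schwarz: `∂ₓ (∂ₜ f) = ∂ₜ (∂ₓ f)`. -/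
theorem hasDerivAt_partialSnd_of_contDiff (hf : ContDiff ℝ 2 f) (x t : ℝ) :
    HasDerivAt (fun y => partialSnd f (y, t)) (partialSnd (partialFst f) (x, t)) x := by
  have hd : Differentiable ℝ f := hf.differentiable (by norm_num)
  have hd' : Differentiable ℝ (fderiv ℝ f) :=
    (hf.fderiv_right (by norm_num : (1 : WithTop ℕ∞) + 1 ≤ 2)).differentiable (by norm_num)
  have hdir (v : ℝ × ℝ) : HasFDerivAt (fun p => fderiv ℝ f p v)
      ((fderiv ℝ (fderiv ℝ f) (x, t)).flip v) (x, t) := by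
    simpa using (hd' (x, t)).hasFDerivAt.clm_apply (hasFDerivAt_const v (x, t))
  rw [partialFst_eq_fderiv hd, partialSnd_eq_fderiv hd]
  convert (hdir (0, 1)).hasDerivAt_comp_mk_left using 1
  rw [partialSnd, (hdir (1, 0)).hasDerivAt_comp_mk_right.deriv]
  exact second_derivative_symmetric (fun y => (hd y).hasFDerivAt) (hd' (x, t)).hasFDerivAt _ _

end PartialDerivatives

theorem ODE_linear_solution_eq_zero {E : Type*} [NormedAddCommGroup E] [NormedSpace ℝ E]
    {A : ℝ → E →L[ℝ] E} (hA : Continuous A) {f : ℝ → E} (hf : ∀ x, HasDerivAt f (A x (f x)) x)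
    {x₀ : ℝ} (hx₀ : f x₀ = 0) (x : ℝ) : f x = 0 := by
  obtain ⟨a, b, hx, hx₀'⟩ : ∃ a b, x ∈ Ioo a b ∧ x₀ ∈ Ioo a b :=
    ⟨min x x₀ - 1, max x x₀ + 1, by grind, by grind⟩
  obtain ⟨K, hK⟩ := (isCompact_Icc (a := a) (b := b)).exists_bound_of_continuousOn hA.continuousOn
  have hlip (y : ℝ) (hy : y ∈ Ioo a b) : LipschitzOnWith K.toNNReal (A y) univ :=
    ((A y).lipschitzWith_of_opNorm_le ((hK y (Ioo_subset_Icc_self hy)).trans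
      (Real.le_coe_toNNReal K))).lipschitzOnWith
  exact ODE_solution_unique_of_mem_Ioo (g := 0) hlip hx₀' (fun y _ => ⟨hf y, mem_univ _⟩)
    (fun y _ => ⟨by simp, mem_univ _⟩) hx₀ hx

section ZeroCurvature

variable {𝔸 : Type*} [NormedRing 𝔸] [NormedAlgebra ℝ 𝔸]

theorem partialSnd_eq_of_zeroCurvature (M B T : ℝ × ℝ → 𝔸) (hM : ContDiff ℝ 1 M)
    (hB : ContDiff ℝ 1 B) (hT : ContDiff ℝ 2 T)
    (hzc : ∀ p, partialSnd M p - partialFst B p = B p * M p - M p * B p)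
    (hT0 : ∀ t, T (0, t) = 1) (hx : ∀ p, partialFst T p = M p * T p) (p : ℝ × ℝ) :
    partialSnd T p = B p * T p - T p * B (0, p.2) := by
  obtain ⟨x₀, t⟩ := p
  have hMd : Differentiable ℝ M := hM.differentiable one_ne_zero
  have hBd : Differentiable ℝ B := hB.differentiable one_ne_zero
  have hTd : Differentiable ℝ T := hT.differentiable two_ne_zero
  set D : ℝ → 𝔸 := fun x => partialSnd T (x, t) - (B (x, t) * T (x, t) - T (x, t) * B (0, t))
  have hT_deriv (x : ℝ) : HasDerivAt (fun y => T (y, t)) (M (x, t) * T (x, t)) x :=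
    hx (x, t) ▸ hasDerivAt_partialFst (hTd _)
  have hTt_deriv (x : ℝ) : HasDerivAt (fun y => partialSnd T (y, t))
      (partialSnd M (x, t) * T (x, t) + M (x, t) * partialSnd T (x, t)) x := by
    have hMT : partialFst T = M * T := funext hx
    refine (hasDerivAt_partialSnd_of_contDiff hT x t).congr_deriv ?_
    rw [hMT]
    exact ((hasDerivAt_partialSnd (hMd _)).mul (hasDerivAt_partialSnd (hTd _))).deriv
  have hD (x : ℝ) : HasDerivAt D (M (x, t) * D x) x := by
    refine ((hTt_deriv x).sub (((hasDerivAt_partialFst (hBd _)).mul (hT_deriv x)).sub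
      ((hT_deriv x).mul_const (B (0, t))))).congr_deriv ?_
    rw [eq_add_of_sub_eq' (hzc (x, t))]
    simp only [D]
    noncomm_ring
  have hD0 : D 0 = 0 := by
    have hconst : partialSnd T (0, t) = 0 := by
      simp only [partialSnd, hT0, deriv_const]
    simp [D, hconst, hT0]
  have hA : Continuous fun x => ContinuousLinearMap.mul ℝ 𝔸 (M (x, t)) :=
    (ContinuousLinearMap.mul ℝ 𝔸).continuous.comp
      (hM.continuous.comp (continuous_id.prodMk continuous_const))
  exact sub_eq_zero.mp (ODE_linear_solution_eq_zero hA hD hD0 x₀)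

end ZeroCurvature

section MatrixEntries

open scoped Matrix.Norms.Operator

variable {m n α : Type*} [Fintype m] [Fintype n] [NormedAddCommGroup α] [NormedSpace ℝ α]

theorem Matrix.contDiff_of_entries {X 𝕜 : Type*} [NormedAddCommGroup X] [NormedSpace ℝ X]
    [NormedField 𝕜] [NormedAlgebra ℝ 𝕜] [DecidableEq m] [DecidableEq n] {k : WithTop ℕ∞}
    {f : X → Matrix m n 𝕜} (hf : ∀ i j, ContDiff ℝ k fun x => f x i j) : ContDiff ℝ k f := by
  rw [show f = fun x => ∑ i, ∑ j, f x i j • Matrix.single i j 1 from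
    funext fun x => by simpa using Matrix.matrix_eq_sum_single (f x)]
  fun_prop

theorem Matrix.partialFst_apply {f : ℝ × ℝ → Matrix m n α} {p : ℝ × ℝ}
    (hf : DifferentiableAt ℝ f p) (i : m) (j : n) :
    partialFst (fun q => f q i j) p = partialFst f p i j :=
  (hasDerivAt_pi.1 (hasDerivAt_pi.1 (hasDerivAt_partialFst hf) i) j).deriv

theorem Matrix.partialSnd_apply {f : ℝ × ℝ → Matrix m n α} {p : ℝ × ℝ}
    (hf : DifferentiableAt ℝ f p) (i : m) (j : n) :
    partialSnd (fun q => f q i j) p = partialSnd f p i j :=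
  (hasDerivAt_pi.1 (hasDerivAt_pi.1 (hasDerivAt_partialSnd hf) i) j).deriv

end MatrixEntries

/-- Equation (eq:SecondStage) of Proposition 3.2: if `M`, `B` satisfy the
zero-curvature equation, `T(0,t) = I` and `∂ₓT = M·T`, then
`∂ₜT(x,t) = B(x,t)·T(x,t) − T(x,t)·B(0,t)`. -/
theorem stmt4 (M B T : ℝ × ℝ → Matrix (Fin 2) (Fin 2) ℂ)
    (hM : ∀ i j : Fin 2, ContDiff ℝ 1 (fun p : ℝ × ℝ => M p i j))
    (hB : ∀ i j : Fin 2, ContDiff ℝ 1 (fun p : ℝ × ℝ => B p i j))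
    (hT : ∀ i j : Fin 2, ContDiff ℝ 2 (fun p : ℝ × ℝ => T p i j))
    (hzc : ∀ (p : ℝ × ℝ) (i j : Fin 2),
      deriv (fun t : ℝ => M (p.1, t) i j) p.2 - deriv (fun x : ℝ => B (x, p.2) i j) p.1
        = (B p * M p - M p * B p) i j)
    (hT0 : ∀ t : ℝ, T (0, t) = 1)
    (hx : ∀ (p : ℝ × ℝ) (i j : Fin 2),
      deriv (fun x : ℝ => T (x, p.2) i j) p.1 = (M p * T p) i j) :
    ∀ (p : ℝ × ℝ) (i j : Fin 2),
      deriv (fun t : ℝ => T (p.1, t) i j) p.2 = (B p * T p - T p * B (0, p.2)) i j := by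
  open scoped Matrix.Norms.Operator in
  have hM' : ContDiff ℝ 1 M := Matrix.contDiff_of_entries hM
  have hB' : ContDiff ℝ 1 B := Matrix.contDiff_of_entries hB
  have hT' : ContDiff ℝ 2 T := Matrix.contDiff_of_entries hT
  have hzc' (p : ℝ × ℝ) : partialSnd M p - partialFst B p = B p * M p - M p * B p := by
    ext i j
    rw [Matrix.sub_apply, ← Matrix.partialSnd_apply (hM'.differentiable one_ne_zero p),
      ← Matrix.partialFst_apply (hB'.differentiable one_ne_zero p)]
    exact hzc p i j
  have hx' (p : ℝ × ℝ) : partialFst T p = M p * T p := by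
    ext i j
    rw [← Matrix.partialFst_apply (hT'.differentiable two_ne_zero p)]
    exact hx p i j
  intro p i j
  rw [← partialSnd_eq_of_zeroCurvature M B T hM' hB' hT' hzc' hT0 hx' p]
  exact Matrix.partialSnd_apply (hT'.differentiable two_ne_zero p) i j
end

section
/- Let n ≥ 2 be a natural number, let f, g, h, fₜ, gₜ, hₜ be complex numbers, and let Aₖ, Cₖ, Dₖ, Axₖ, Cxₖ, Dxₖ (0 ≤ k ≤ n) be complex numbers. Suppose that for every z ∈ ℂ, writing Ã(z) = Σₖ Aₖ·zᵏ and similarly for C̃, D̃, Ãₓ, C̃ₓ, D̃ₓ, the three equations hold: z·hₜ − C̃ₓ(z) = 2z·h·Ã(z) − 2z·g·C̃(z); −z·fₜ + D̃ₓ(z) = 2z·f·Ã(z) − 2z·g·D̃(z); and z·gₜ − Ãₓ(z) = −z·f·C̃(z) + z·h·D̃(z). Then for every k with 2 ≤ k ≤ n: f·Cxₖ + h·Dxₖ − 2·g·Axₖ = 0. -/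
open Finset in
/-- Equation (4.4) in the proof of Theorem 4.1: since `z·Δₜ` is of degree at most
one in `z`, the coefficients of `zᵏ` for `2 ≤ k ≤ n` in
`f·C̃ₓ(z) + h·D̃ₓ(z) − 2g·Ãₓ(z)` must vanish. -/
theorem stmt13 (n : ℕ) (hn : 2 ≤ n) (f g h fₜ gₜ hₜ : ℂ)
    (A C D Ax Cx Dx : ℕ → ℂ)
    (h1 : ∀ z : ℂ, z * hₜ - ∑ k ∈ range (n + 1), Cx k * z ^ k
      = 2 * z * h * ∑ k ∈ range (n + 1), A k * z ^ k
        - 2 * z * g * ∑ k ∈ range (n + 1), C k * z ^ k)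
    (h2 : ∀ z : ℂ, -(z * fₜ) + ∑ k ∈ range (n + 1), Dx k * z ^ k
      = 2 * z * f * ∑ k ∈ range (n + 1), A k * z ^ k
        - 2 * z * g * ∑ k ∈ range (n + 1), D k * z ^ k)
    (h3 : ∀ z : ℂ, z * gₜ - ∑ k ∈ range (n + 1), Ax k * z ^ k
      = -(z * f * ∑ k ∈ range (n + 1), C k * z ^ k)
        + z * h * ∑ k ∈ range (n + 1), D k * z ^ k) :
    ∀ k : ℕ, 2 ≤ k → k ≤ n → f * Cx k + h * Dx k - 2 * g * Ax k = 0 := by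
  intro k hk2 hkn
  set c : ℂ := f * hₜ + h * fₜ - 2 * g * gₜ with hc
  have key : ∀ z : ℂ,
      ∑ j ∈ range (n + 1), (f * Cx j + h * Dx j - 2 * g * Ax j) * z ^ j = c * z := by
    intro z
    have expand : ∑ j ∈ range (n + 1), (f * Cx j + h * Dx j - 2 * g * Ax j) * z ^ j
        = f * ∑ j ∈ range (n + 1), Cx j * z ^ j
          + h * ∑ j ∈ range (n + 1), Dx j * z ^ j
          - 2 * g * ∑ j ∈ range (n + 1), Ax j * z ^ j := by
      rw [Finset.mul_sum, Finset.mul_sum, Finset.mul_sum, ← Finset.sum_add_distrib,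
        ← Finset.sum_sub_distrib]
      exact Finset.sum_congr rfl fun j _ => by ring
    rw [expand, hc]
    linear_combination (-f) * h1 z + h * h2 z + 2 * g * h3 z
  set p : Polynomial ℂ :=
    (∑ j ∈ range (n + 1),
      Polynomial.C (f * Cx j + h * Dx j - 2 * g * Ax j) * Polynomial.X ^ j)
      - Polynomial.C c * Polynomial.X with hp
  have heval : ∀ z : ℂ, p.eval z = 0 := by
    intro z
    simp only [hp, Polynomial.eval_sub, Polynomial.eval_finset_sum, Polynomial.eval_mul,
      Polynomial.eval_C, Polynomial.eval_pow, Polynomial.eval_X]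
    rw [key z]; ring
  have hp0 : p = 0 := by
    apply Polynomial.funext
    intro z
    simp [heval z]
  have := congrArg (fun q => Polynomial.coeff q k) hp0
  simp only [hp, Polynomial.coeff_sub, Polynomial.finset_sum_coeff,
    Polynomial.coeff_C_mul, Polynomial.coeff_X_pow, Polynomial.coeff_zero,
    Polynomial.coeff_X, mul_ite, mul_one, mul_zero] at this
  rw [Finset.sum_ite_eq (range (n + 1)) k] at this
  simp only [Finset.mem_range, Nat.lt_succ_iff, hkn, if_true] at this
  have hk1 : ¬ (1 = k) := by omega
  simpa [hk1] using this
end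

section
/- Let n ≥ 2 be a natural number. Let f, g, h, fₜ, gₜ, hₜ : ℝ → ℝ be functions with f, g, h differentiable, and suppose h(x) > 0 and f(x)·h(x) − g(x)² > 0 for all x ∈ ℝ. Let Aₖ, Cₖ, Dₖ : ℝ → ℝ (0 ≤ k ≤ n) be differentiable functions. Suppose that for every z ∈ ℝ and every x ∈ ℝ the three equations hold: z·hₜ(x) − Σₖ Cₖ′(x)·zᵏ = 2z·h(x)·Σₖ Aₖ(x)·zᵏ − 2z·g(x)·Σₖ Cₖ(x)·zᵏ; −z·fₜ(x) + Σₖ Dₖ′(x)·zᵏ = 2z·f(x)·Σₖ Aₖ(x)·zᵏ − 2z·g(x)·Σₖ Dₖ(x)·zᵏ; and z·gₜ(x) − Σₖ Aₖ′(x)·zᵏ = −z·f(x)·Σₖ Cₖ(x)·zᵏ + z·h(x)·Σₖ Dₖ(x)·zᵏ (sums over 0 ≤ k ≤ n). Then the function x ↦ (Cₙ(x)/h(x))²·(f(x)·h(x) − g(x)²) is constant on ℝ. -/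
/-!
Comparing the coefficients of `z ^ (n + 1)` in the zero-curvature equations gives
`Aₙ = g c`, `Dₙ = f c` and `Cₙ = h c` with `c = Cₙ / h`, while the coefficients of `z ^ n`
combine, after the `Aₙ₋₁, Cₙ₋₁, Dₙ₋₁` terms cancel, to `f Cₙ' + h Dₙ' = 2 g Aₙ'`.
Substituting the first three relations turns this into `c Δ' + 2 c' Δ = 0` for
`Δ = f h - g²`, and `(c² Δ)' = c (c Δ' + 2 c' Δ)`.
-/

open Polynomial Finset

section CoeffComparison

variable {R : Type*} [CommRing R]

theorem coeff_sum_range_C_mul_X_pow (c : ℕ → R) (m j : ℕ) :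
    (∑ k ∈ range m, C (c k) * X ^ k).coeff j = if j < m then c j else 0 := by
  simp only [finsetSum_coeff, coeff_C_mul_X_pow]
  split_ifs with hj
  · rw [Finset.sum_eq_single j (fun k _ hk => if_neg (Ne.symm hk))
      (fun hj' => absurd (mem_range.2 hj) hj'), if_pos rfl]
  · exact Finset.sum_eq_zero fun k hk => if_neg fun hjk : j = k => hj (hjk ▸ mem_range.1 hk)

variable [IsDomain R] [Infinite R]

theorem top_coeffs_eq_of_forall_eval {n : ℕ} (hn : 2 ≤ n) {u s a b : R} {p q r : ℕ → R}
    (H : ∀ z : R, z * u + s * ∑ k ∈ range (n + 1), p k * z ^ k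
      = z * (a * ∑ k ∈ range (n + 1), q k * z ^ k + b * ∑ k ∈ range (n + 1), r k * z ^ k)) :
    a * q n + b * r n = 0 ∧ s * p n = a * q (n - 1) + b * r (n - 1) := by
  set P : (ℕ → R) → R[X] := fun c => ∑ k ∈ range (n + 1), C (c k) * X ^ k
  have hpoly : C u * X + C s * P p = X * (C a * P q + C b * P r) :=
    Polynomial.funext fun z => by
      simp only [P, eval_add, eval_mul, eval_C, eval_X, eval_finsetSum, eval_pow]
      linear_combination H z
  obtain ⟨m, rfl⟩ : ∃ m, n = m + 2 := ⟨n - 2, by omega⟩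
  have top := congrArg (coeff · (m + 3)) hpoly
  have sub := congrArg (coeff · (m + 2)) hpoly
  simp only [coeff_add, coeff_C_mul, coeff_X, coeff_X_mul, P,
    coeff_sum_range_C_mul_X_pow] at top sub
  constructor
  · simpa using top.symm
  · simpa using sub

end CoeffComparison

theorem sq_mul_det_eq_of_deriv {f g h c : ℝ → ℝ} (hf : Differentiable ℝ f)
    (hg : Differentiable ℝ g) (hh : Differentiable ℝ h) (hc : Differentiable ℝ c)
    (hK : ∀ x, f x * deriv (h * c) x + h x * deriv (f * c) x = 2 * g x * deriv (g * c) x)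
    (x y : ℝ) :
    c x ^ 2 * (f x * h x - g x ^ 2) = c y ^ 2 * (f y * h y - g y ^ 2) := by
  have hderiv t : HasDerivAt (fun y => c y ^ 2 * (f y * h y - g y ^ 2)) 0 t := by
    have K := hK t
    simp only [deriv_mul (hh t) (hc t), deriv_mul (hf t) (hc t), deriv_mul (hg t) (hc t)]
      at K
    refine (((hc t).hasDerivAt.pow 2).mul
      (((hf t).hasDerivAt.mul (hh t).hasDerivAt).sub ((hg t).hasDerivAt.pow 2))).congr_deriv ?_
    simp only [Pi.pow_apply, Pi.mul_apply, Pi.sub_apply]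
    linear_combination c t * K
  exact is_const_of_deriv_eq_zero (fun t => (hderiv t).differentiableAt)
    (fun t => (hderiv t).deriv) x y

open Finset in
theorem stmt16_general (n : ℕ) (hn : 2 ≤ n) (f g h fₜ gₜ hₜ : ℝ → ℝ)
    (hf : Differentiable ℝ f) (hg : Differentiable ℝ g) (hh : Differentiable ℝ h)
    (hhpos : ∀ x : ℝ, 0 < h x)
    (A C D : ℕ → ℝ → ℝ)
    (hC : ∀ k : ℕ, Differentiable ℝ (C k))
    (h1 : ∀ z x : ℝ, z * hₜ x - ∑ k ∈ range (n + 1), deriv (C k) x * z ^ k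
      = 2 * z * h x * ∑ k ∈ range (n + 1), A k x * z ^ k
        - 2 * z * g x * ∑ k ∈ range (n + 1), C k x * z ^ k)
    (h2 : ∀ z x : ℝ, -(z * fₜ x) + ∑ k ∈ range (n + 1), deriv (D k) x * z ^ k
      = 2 * z * f x * ∑ k ∈ range (n + 1), A k x * z ^ k
        - 2 * z * g x * ∑ k ∈ range (n + 1), D k x * z ^ k)
    (h3 : ∀ z x : ℝ, z * gₜ x - ∑ k ∈ range (n + 1), deriv (A k) x * z ^ k
      = -(z * f x * ∑ k ∈ range (n + 1), C k x * z ^ k)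
        + z * h x * ∑ k ∈ range (n + 1), D k x * z ^ k) :
    ∀ x y : ℝ, (C n x / h x) ^ 2 * (f x * h x - g x ^ 2)
      = (C n y / h y) ^ 2 * (f y * h y - g y ^ 2) := by
  have eqC x := top_coeffs_eq_of_forall_eval hn (u := hₜ x) (s := -1) (a := 2 * h x)
    (b := -(2 * g x)) (p := fun k => deriv (C k) x) (q := fun k => A k x) (r := fun k => C k x)
    fun z => by linear_combination h1 z x
  have eqD x := top_coeffs_eq_of_forall_eval hn (u := -fₜ x) (s := 1) (a := 2 * f x)
    (b := -(2 * g x)) (p := fun k => deriv (D k) x) (q := fun k => A k x) (r := fun k => D k x)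
    fun z => by linear_combination h2 z x
  have eqA x := top_coeffs_eq_of_forall_eval hn (u := gₜ x) (s := -1) (a := -f x) (b := h x)
    (p := fun k => deriv (A k) x) (q := fun k => C k x) (r := fun k => D k x)
    fun z => by linear_combination h3 z x
  have hh0 x : h x ≠ 0 := (hhpos x).ne'
  let c x := C n x / h x
  have hCn : C n = h * c := funext fun x => (mul_div_cancel₀ _ (hh0 x)).symm
  have hAn : A n = g * c := funext fun x => by
    simp only [Pi.mul_apply, c]
    field_simp [hh0 x]
    linear_combination (eqC x).1 / 2
  have hDn : D n = f * c := funext fun x => by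
    simp only [Pi.mul_apply, c]
    field_simp [hh0 x]
    linear_combination (eqA x).1
  have hK x : f x * deriv (h * c) x + h x * deriv (f * c) x = 2 * g x * deriv (g * c) x := by
    rw [← hCn, ← hAn, ← hDn]
    linear_combination -f x * (eqC x).2 + h x * (eqD x).2 + 2 * g x * (eqA x).2
  exact sq_mul_det_eq_of_deriv hf hg hh ((hC n).div hh hh0) hK

open Finset in
/-- Theorem 4.1 (concrete form): for a positive-definite Hamiltonian with entries
`f, g, h` and polynomial (degree `n ≥ 2` in `z`) entries `Ã, C̃, D̃` of the
generator `B̃` satisfying the three zero-curvature equations (3.14) for all `z`,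
the function `x ↦ (Cₙ/h)²·(f·h − g²)` is constant. -/
theorem stmt16 (n : ℕ) (hn : 2 ≤ n) (f g h fₜ gₜ hₜ : ℝ → ℝ)
    (hf : Differentiable ℝ f) (hg : Differentiable ℝ g) (hh : Differentiable ℝ h)
    (hhpos : ∀ x : ℝ, 0 < h x) (hΔpos : ∀ x : ℝ, 0 < f x * h x - g x ^ 2)
    (A C D : ℕ → ℝ → ℝ)
    (hA : ∀ k : ℕ, Differentiable ℝ (A k))
    (hC : ∀ k : ℕ, Differentiable ℝ (C k))
    (hD : ∀ k : ℕ, Differentiable ℝ (D k))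
    (h1 : ∀ z x : ℝ, z * hₜ x - ∑ k ∈ range (n + 1), deriv (C k) x * z ^ k
      = 2 * z * h x * ∑ k ∈ range (n + 1), A k x * z ^ k
        - 2 * z * g x * ∑ k ∈ range (n + 1), C k x * z ^ k)
    (h2 : ∀ z x : ℝ, -(z * fₜ x) + ∑ k ∈ range (n + 1), deriv (D k) x * z ^ k
      = 2 * z * f x * ∑ k ∈ range (n + 1), A k x * z ^ k
        - 2 * z * g x * ∑ k ∈ range (n + 1), D k x * z ^ k)
    (h3 : ∀ z x : ℝ, z * gₜ x - ∑ k ∈ range (n + 1), deriv (A k) x * z ^ k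
      = -(z * f x * ∑ k ∈ range (n + 1), C k x * z ^ k)
        + z * h x * ∑ k ∈ range (n + 1), D k x * z ^ k) :
    ∀ x y : ℝ, (C n x / h x) ^ 2 * (f x * h x - g x ^ 2)
      = (C n y / h y) ^ 2 * (f y * h y - g y ^ 2) :=
  stmt16_general n hn f g h fₜ gₜ hₜ hf hg hh hhpos A C D hC h1 h2 h3
end

section
/- Let V, u, v : ℝ → ℝ with u and v twice differentiable, and suppose u″(x) = V(x)·u(x) and v″(x) = V(x)·v(x) for all x. Then for all x: (u²)″(x)·(v²)″(x) − ((u·v)″(x))² = 4·V(x)·(u′(x)·v(x) − u(x)·v′(x))². In particular, if the Wronskian u·v′ − u′·v is identically 1, then this expression equals 4·V(x). -/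
/-!
For solutions of `y″ = V·y` the Leibniz rule gives `(f·g)″ = 2·(V·f·g + f′·g′)`, so the three
second derivatives are explicit quadratic forms in `(u, u′, v, v′)`, and
`(V·u² + u′²)(V·v² + v′²) − (V·u·v + u′·v′)² = V·(u′·v − u·v′)²` is a polynomial identity.
-/

section SecondDerivative

variable {𝕜 𝔸 : Type*} [NontriviallyNormedField 𝕜] [NormedRing 𝔸] [NormedAlgebra 𝕜 𝔸]

theorem deriv_deriv_fun_mul {f g : 𝕜 → 𝔸} (hf : Differentiable 𝕜 f)
    (hf' : Differentiable 𝕜 (deriv f)) (hg : Differentiable 𝕜 g)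
    (hg' : Differentiable 𝕜 (deriv g)) (x : 𝕜) :
    deriv (deriv fun y => f y * g y) x
      = deriv (deriv f) x * g x + 2 * (deriv f x * deriv g x) + f x * deriv (deriv g) x := by
  have h_deriv : deriv (fun y => f y * g y) = fun y => deriv f y * g y + f y * deriv g y :=
    funext fun y => deriv_fun_mul (hf y) (hg y)
  rw [h_deriv, deriv_fun_add ((hf' x).fun_mul (hg x)) ((hf x).fun_mul (hg' x)),
    deriv_fun_mul (hf' x) (hg x), deriv_fun_mul (hf x) (hg' x), two_mul]
  abel

theorem deriv_deriv_fun_mul_of_deriv_deriv_eq_mul {V f g : 𝕜 → 𝕜} {x : 𝕜}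
    (hf : Differentiable 𝕜 f) (hf' : Differentiable 𝕜 (deriv f)) (hg : Differentiable 𝕜 g)
    (hg' : Differentiable 𝕜 (deriv g)) (hfV : deriv (deriv f) x = V x * f x)
    (hgV : deriv (deriv g) x = V x * g x) :
    deriv (deriv fun y => f y * g y) x = 2 * (V x * f x * g x + deriv f x * deriv g x) := by
  rw [deriv_deriv_fun_mul hf hf' hg hg', hfV, hgV]
  ring

end SecondDerivative

/-- Remark 1 after Theorem 4.1: for zero-energy solutions `u, v` of the
Schrödinger equation (`u″ = V·u`, `v″ = V·v`),
`(u²)″·(v²)″ − ((u·v)″)² = 4·V·(u′·v − u·v′)²`; in particular this equals `4V`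
when the Wronskian `u·v′ − u′·v` is identically `1`. -/
theorem stmt17 (V u v : ℝ → ℝ)
    (hu : Differentiable ℝ u) (hu' : Differentiable ℝ (deriv u))
    (hv : Differentiable ℝ v) (hv' : Differentiable ℝ (deriv v))
    (huV : ∀ x : ℝ, deriv (deriv u) x = V x * u x)
    (hvV : ∀ x : ℝ, deriv (deriv v) x = V x * v x) :
    (∀ x : ℝ, deriv (deriv (fun y : ℝ => u y ^ 2)) x
        * deriv (deriv (fun y : ℝ => v y ^ 2)) x
        - (deriv (deriv (fun y : ℝ => u y * v y)) x) ^ 2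
      = 4 * V x * (deriv u x * v x - u x * deriv v x) ^ 2)
    ∧ ((∀ x : ℝ, u x * deriv v x - deriv u x * v x = 1) →
        ∀ x : ℝ, deriv (deriv (fun y : ℝ => u y ^ 2)) x
            * deriv (deriv (fun y : ℝ => v y ^ 2)) x
            - (deriv (deriv (fun y : ℝ => u y * v y)) x) ^ 2
          = 4 * V x) := by
  have hessian_det (x : ℝ) : deriv (deriv (fun y : ℝ => u y ^ 2)) x
        * deriv (deriv (fun y : ℝ => v y ^ 2)) x
        - (deriv (deriv (fun y : ℝ => u y * v y)) x) ^ 2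
      = 4 * V x * (deriv u x * v x - u x * deriv v x) ^ 2 := by
    simp only [sq (u _), sq (v _)]
    rw [deriv_deriv_fun_mul_of_deriv_deriv_eq_mul hu hu' hu hu' (huV x) (huV x),
      deriv_deriv_fun_mul_of_deriv_deriv_eq_mul hv hv' hv hv' (hvV x) (hvV x),
      deriv_deriv_fun_mul_of_deriv_deriv_eq_mul hu hu' hv hv' (huV x) (hvV x)]
    ring
  refine ⟨hessian_det, fun hW x => ?_⟩
  have hW' : deriv u x * v x - u x * deriv v x = -1 := by linarith [hW x]
  rw [hessian_det, hW']
  ring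
end
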